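/- arXiv:2505.11693 — 5 statements merged into one kernel-verified Lean document; each statement's English description precedes it below -/
import Mathlib

section
/- For any finite set of arcs E with no two arcs having identical endpoint pairs {min, max}, there exists a proper rope cover: a rope cover R such that no arc in R leans on another arc in R. -/
/-!
Leaning strictly increases the length `amax - amin` of an arc, so arcs can be added to the
cover in order of increasing length: when a new shortest arc `a` arrives, either it leans on
an arc already in the cover, or it can be added to the cover, and since no arc leans on a
shorter one the cover stays proper.
-/

def amin (a : ℕ × ℕ) : ℕ := min a.1 a.2
def amax (a : ℕ × ℕ) : ℕ := max a.1 a.2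
def covers (b a : ℕ × ℕ) : Prop := amin b ≤ amin a ∧ amin a < amax a ∧ amax a ≤ amax b
/-- Arc `a` leans on arc `b` (distinctness is as undirected endpoint pairs). -/
def leansOn (a b : ℕ × ℕ) : Prop :=
  covers b a ∧ (amin a, amax a) ≠ (amin b, amax b) ∧
    (amin a = amin b ∨ amax a = amax b)
def IsRopeCover (E R : Finset (ℕ × ℕ)) : Prop :=
  R ⊆ E ∧ ∀ a ∈ E \ R, ∃ b ∈ R, leansOn a b
/-- `R` is proper if no arc of `R` leans on another arc of `R`. -/
def IsProper (R : Finset (ℕ × ℕ)) : Prop := ∀ a ∈ R, ∀ b ∈ R, ¬ leansOn a b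

def arcLength (a : ℕ × ℕ) : ℕ := amax a - amin a

lemma arcLength_lt_of_leansOn {a b : ℕ × ℕ} (h : leansOn a b) : arcLength a < arcLength b := by
  obtain ⟨⟨hmin, hlt, hmax⟩, hne, -⟩ := h
  have : ¬ (amin a = amin b ∧ amax a = amax b) := fun ⟨u, v⟩ => hne (by rw [u, v])
  unfold arcLength
  omega

lemma not_leansOn_of_arcLength_le {a b : ℕ × ℕ} (h : arcLength a ≤ arcLength b) :
    ¬ leansOn b a :=
  fun hba => (arcLength_lt_of_leansOn hba).not_ge h

lemma not_leansOn_self (a : ℕ × ℕ) : ¬ leansOn a a :=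
  fun h => (arcLength_lt_of_leansOn h).false

lemma isRopeCover_empty : IsRopeCover ∅ ∅ :=
  ⟨subset_rfl, by simp⟩

namespace IsRopeCover

variable {E R : Finset (ℕ × ℕ)} {a : ℕ × ℕ}

lemma insert_of_leansOn (hR : IsRopeCover E R) {b : ℕ × ℕ} (hb : b ∈ R) (hab : leansOn a b) :
    IsRopeCover (insert a E) R := by
  refine ⟨hR.1.trans (Finset.subset_insert a E), fun x hx => ?_⟩
  obtain ⟨hxE, hxR⟩ := Finset.mem_sdiff.mp hx
  rcases Finset.mem_insert.mp hxE with rfl | hxE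
  · exact ⟨b, hb, hab⟩
  · exact hR.2 x (Finset.mem_sdiff.mpr ⟨hxE, hxR⟩)

lemma insert_insert (hR : IsRopeCover E R) : IsRopeCover (insert a E) (insert a R) := by
  refine ⟨Finset.insert_subset_insert a hR.1, fun x hx => ?_⟩
  obtain ⟨hxE, hxR⟩ := Finset.mem_sdiff.mp hx
  have hxa : x ≠ a := fun h => hxR (h ▸ Finset.mem_insert_self a R)
  have hxE : x ∈ E := (Finset.mem_insert.mp hxE).resolve_left hxa
  obtain ⟨b, hb, hxb⟩ :=
    hR.2 x (Finset.mem_sdiff.mpr ⟨hxE, fun h => hxR (Finset.mem_insert_of_mem h)⟩)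
  exact ⟨b, Finset.mem_insert_of_mem hb, hxb⟩

end IsRopeCover

lemma IsProper.insert_of_forall_arcLength_le {R : Finset (ℕ × ℕ)} {a : ℕ × ℕ} (hR : IsProper R)
    (ha : ∀ b ∈ R, ¬ leansOn a b) (hshort : ∀ b ∈ R, arcLength a ≤ arcLength b) :
    IsProper (insert a R) := by
  intro x hx y hy
  rw [Finset.mem_insert] at hx hy
  rcases hx with rfl | hx
  · rcases hy with rfl | hy
    · exact not_leansOn_self _
    · exact ha y hy
  · rcases hy with rfl | hy
    · exact not_leansOn_of_arcLength_le (hshort x hx)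
    · exact hR x hx y hy

theorem exists_proper_ropeCover_general (E : Finset (ℕ × ℕ)) :
    ∃ R, IsRopeCover E R ∧ IsProper R := by
  classical
  induction E using Finset.induction_on_min_value arcLength with
  | empty => exact ⟨∅, isRopeCover_empty, by simp [IsProper]⟩
  | insert a E _ hshort ih =>
    obtain ⟨R, hcover, hproper⟩ := ih
    by_cases hlean : ∃ b ∈ R, leansOn a b
    · obtain ⟨b, hb, hab⟩ := hlean
      exact ⟨R, hcover.insert_of_leansOn hb hab, hproper⟩
    · push Not at hlean
      exact ⟨insert a R, hcover.insert_insert,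
        hproper.insert_of_forall_arcLength_le hlean fun b hb => hshort b (hcover.1 hb)⟩

/-- For any finite set of arcs in which no two arcs have identical endpoint pairs,
there exists a proper rope cover. -/
theorem exists_proper_ropeCover (E : Finset (ℕ × ℕ)) (hE : ∀ a ∈ E, a.1 ≠ a.2)
    (hdist : ∀ a ∈ E, ∀ b ∈ E, amin a = amin b → amax a = amax b → a = b) :
    ∃ R, IsRopeCover E R ∧ IsProper R :=
  exists_proper_ropeCover_general E
end

section
/- In a projective dependency tree, no two distinct arcs cross: there is no pair of arcs (a,b), (c,d) with min(a,b) < min(c,d) < max(a,b) < max(c,d). -/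
/-! If arcs `(a, b)` and `(c, d)` crossed, projectivity would make `min c d` a descendant of `a`
and `max a b` a descendant of `c`. A descendant endpoint of an arc drags the arc's head along:
a path from `a` to the dependent `d` must end with the arc from `d`'s unique parent `c`. So `a`
and `c` would be descendants of each other, hence equal by acyclicity, which the crossing
forbids. -/

/-- A dependency tree on nodes `{0, ..., n}`: node 0 has no parent, every other node
has exactly one parent, and the arc relation is acyclic. -/
structure DepTree (n : ℕ) where
  arc : ℕ → ℕ → Prop
  dom : ∀ i j, arc i j → i ≤ n ∧ j ≤ n
  rootNoParent : ∀ i, ¬ arc i 0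
  uniqueParent : ∀ j, 1 ≤ j → j ≤ n → ∃! i, arc i j
  acyclic : ∀ k, ¬ Relation.TransGen arc k k

/-- `k` is a descendant of `i`: there is a directed path of arcs from `i` to `k`. -/
def desc {n : ℕ} (T : DepTree n) (i k : ℕ) : Prop := Relation.ReflTransGen T.arc i k

/-- Projectivity: for each arc `(i,j)`, all nodes strictly between the endpoints
are descendants of `i` or of `j`. -/
def Projective {n : ℕ} (T : DepTree n) : Prop :=
  ∀ i j, T.arc i j → ∀ k, min i j < k → k < max i j → desc T i k ∨ desc T j k

namespace DepTree

variable {n : ℕ} (T : DepTree n)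

theorem parent_unique {i i' j : ℕ} (h : T.arc i j) (h' : T.arc i' j) : i = i' := by
  have hj : j ≠ 0 := fun e => T.rootNoParent i (e ▸ h)
  obtain ⟨p, -, hp⟩ := T.uniqueParent j (Nat.one_le_iff_ne_zero.mpr hj) (T.dom i j h).2
  rw [hp i h, hp i' h']

theorem desc_of_desc_of_arc {x c d : ℕ} (hcd : T.arc c d) (hxd : x ≠ d) (h : desc T x d) :
    desc T x c := by
  obtain ⟨m, hxm, hmd⟩ := Relation.TransGen.tail'_iff.mp
    ((Relation.reflTransGen_iff_eq_or_transGen.mp h).resolve_left (Ne.symm hxd))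
  exact T.parent_unique hmd hcd ▸ hxm

theorem eq_of_desc_of_desc {x y : ℕ} (hxy : desc T x y) (hyx : desc T y x) : x = y := by
  by_contra hne
  have hxy' := (Relation.reflTransGen_iff_eq_or_transGen.mp hxy).resolve_left (Ne.symm hne)
  exact T.acyclic x (hxy'.trans_left hyx)

end DepTree

section Projective

variable {n : ℕ} {T : DepTree n}

theorem Projective.desc_of_between (hproj : Projective T) {i j k : ℕ} (h : T.arc i j)
    (hk₁ : min i j < k) (hk₂ : k < max i j) : desc T i k :=
  (hproj i j h k hk₁ hk₂).elim id (Relation.ReflTransGen.head h)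

theorem Projective.desc_head_of_endpoint_between (hproj : Projective T) {a b c d e : ℕ}
    (hab : T.arc a b) (hcd : T.arc c d) (he : e = c ∨ e = d)
    (he₁ : min a b < e) (he₂ : e < max a b) : desc T a c := by
  have hae : desc T a e := hproj.desc_of_between hab he₁ he₂
  rcases he with rfl | rfl
  · exact hae
  · exact T.desc_of_desc_of_arc hcd (by omega) hae

end Projective

/-- In a projective dependency tree, no two arcs cross. -/
theorem projective_no_crossing {n : ℕ} (T : DepTree n) (hproj : Projective T)
    (a b c d : ℕ) (h1 : T.arc a b) (h2 : T.arc c d)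
    (hx1 : min a b < min c d) (hx2 : min c d < max a b) (hx3 : max a b < max c d) :
    False := by
  have hac : desc T a c :=
    hproj.desc_head_of_endpoint_between h1 h2 (min_choice c d) hx1 hx2
  have hca : desc T c a :=
    hproj.desc_head_of_endpoint_between h2 h1 (max_choice a b) hx2 hx3
  have : a = c := T.eq_of_desc_of_desc hac hca
  omega
end

section
/- In the rope cover R_4b of a projective dependency tree, obtained by taking for each node its longest outgoing rightward arc and its longest outgoing leftward arc (when they exist), every arc not in R_4b leans on some arc of R_4b; hence R_4b is a rope cover. -/
/-- `(i,j)` is in `R₄b`: it is an arc of `T` which is the longest rightward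
(resp. leftward) outgoing arc of its head `i`. -/
def R4b {n : ℕ} (T : DepTree n) (i j : ℕ) : Prop :=
  T.arc i j ∧
    ((i < j ∧ ∀ k, T.arc i k → i < k → k ≤ j) ∨
     (j < i ∧ ∀ k, T.arc i k → k < i → j ≤ k))

/-! A non-`R₄b` arc `i → j` is beaten by a longer arc `i → k` in the same direction, hence
by the longest such arc `i → m`, which lies in `R₄b`, covers `i → j` and shares its head. -/

namespace DepTree

variable {n : ℕ} (T : DepTree n) {i k : ℕ}

theorem ne_of_arc {j : ℕ} (h : T.arc i j) : i ≠ j := by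
  rintro rfl
  exact T.acyclic i (.single h)

theorem exists_R4b_right_ge (hk : T.arc i k) (hik : i < k) : ∃ m, R4b T i m ∧ k ≤ m := by
  classical
  let P := fun m => T.arc i m ∧ i < m
  have hbound : ∀ m, P m → m ≤ n := fun m hm => (T.dom i m hm.1).2
  have hP : P (Nat.findGreatest P n) := Nat.findGreatest_spec (hbound k ⟨hk, hik⟩) ⟨hk, hik⟩
  have hle : ∀ m, P m → m ≤ Nat.findGreatest P n := fun m hm =>
    Nat.le_findGreatest (hbound m hm) hm
  exact ⟨_, ⟨hP.1, .inl ⟨hP.2, fun m ha hm => hle m ⟨ha, hm⟩⟩⟩, hle k ⟨hk, hik⟩⟩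

theorem exists_R4b_left_le (hk : T.arc i k) (hki : k < i) : ∃ m, R4b T i m ∧ m ≤ k := by
  classical
  let P := fun m => T.arc i m ∧ m < i
  have hex : ∃ m, P m := ⟨k, hk, hki⟩
  have hP : P (Nat.find hex) := Nat.find_spec hex
  exact ⟨_, ⟨hP.1, .inr ⟨hP.2, fun m ha hm => Nat.find_min' hex ⟨ha, hm⟩⟩⟩,
    Nat.find_min' hex ⟨hk, hki⟩⟩

end DepTree

theorem leansOn_of_lt_of_lt {i j m : ℕ} (hij : i < j) (hjm : j < m) : leansOn (i, j) (i, m) := by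
  simp only [leansOn, covers, amin, amax, ne_eq, Prod.mk.injEq]
  omega

theorem leansOn_of_gt_of_gt {i j m : ℕ} (hji : j < i) (hmj : m < j) : leansOn (i, j) (i, m) := by
  simp only [leansOn, covers, amin, amax, ne_eq, Prod.mk.injEq]
  omega

theorem R4b_isRopeCover_general {n : ℕ} (T : DepTree n)
    (i j : ℕ) (harc : T.arc i j) (hnot : ¬ R4b T i j) :
    ∃ a b, R4b T a b ∧ leansOn (i, j) (a, b) := by
  rcases lt_or_gt_of_ne (T.ne_of_arc harc) with h | h
  · obtain ⟨k, hk, hik, hjk⟩ : ∃ k, T.arc i k ∧ i < k ∧ j < k := by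
      by_contra! hc
      exact hnot ⟨harc, .inl ⟨h, hc⟩⟩
    obtain ⟨m, hm, hkm⟩ := T.exists_R4b_right_ge hk hik
    exact ⟨i, m, hm, leansOn_of_lt_of_lt h (hjk.trans_le hkm)⟩
  · obtain ⟨k, hk, hki, hkj⟩ : ∃ k, T.arc i k ∧ k < i ∧ k < j := by
      by_contra! hc
      exact hnot ⟨harc, .inr ⟨h, hc⟩⟩
    obtain ⟨m, hm, hmk⟩ := T.exists_R4b_left_le hk hki
    exact ⟨i, m, hm, leansOn_of_gt_of_gt h (hmk.trans_lt hkj)⟩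

/-- In a projective dependency tree, every arc not in `R₄b` leans on some arc of `R₄b`;
hence `R₄b` is a rope cover. -/
theorem R4b_isRopeCover {n : ℕ} (T : DepTree n) (hproj : Projective T)
    (i j : ℕ) (harc : T.arc i j) (hnot : ¬ R4b T i j) :
    ∃ a b, R4b T a b ∧ leansOn (i, j) (a, b) :=
  R4b_isRopeCover_general T i j harc hnot
end

section
/- In the hierarchical bracketing encoding of a projective dependency tree induced by a compact rope cover, no label contains the semibrackets corresponding to outgoing auxiliary arcs toward the covering direction ('\\' left-origin or '/' right-origin semibrackets): i.e., an auxiliary arc always receives its semibracket at the endpoint not shared with its supporting structural arc, and in a projective tree the shared endpoint is always the head-side endpoint of the supporting arc. Formally: in a projective tree, an auxiliary arc cannot lean on a structural arc covered by an arc outgoing from the auxiliary arc's own endpoint — there is no arc (k,l) in the tree and structural arc (i,j) covering it with the node bearing the origin-side semibracket dominating the covering arc. -/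
/-!
The covering arc joins `i` to some `m > j`. If it is `i → m`, projectivity makes `j` a
descendant of `i`, which together with `j → i` closes a cycle; if it is `m → i`, then `i`
has the two distinct heads `m` and `j`.
-/

theorem DepTree.eq_of_arc_of_arc {n : ℕ} (T : DepTree n) {p q k : ℕ}
    (hp : T.arc p k) (hq : T.arc q k) : p = q := by
  have hk : 1 ≤ k := Nat.one_le_iff_ne_zero.mpr fun h => T.rootNoParent p (h ▸ hp)
  exact (T.uniqueParent k hk (T.dom p k hp).2).unique hp hq

theorem DepTree.not_desc_of_arc {n : ℕ} (T : DepTree n) {h d : ℕ} (hhd : T.arc h d) :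
    ¬ desc T d h :=
  fun hdh => T.acyclic d (Relation.TransGen.tail' hdh hhd)

theorem Projective.desc_of_arc {n : ℕ} {T : DepTree n} (hproj : Projective T) {h d k : ℕ}
    (hhd : T.arc h d) (hk₁ : min h d < k) (hk₂ : k < max h d) : desc T h k :=
  (hproj h d hhd k hk₁ hk₂).elim id (Relation.ReflTransGen.head hhd)

/-- In a projective dependency tree, a leftward arc `j → i` (with `i < j`) cannot lean
on a covering arc through its left (dependent-side) endpoint `i`: there is no arc
`(a,b)` of the tree, distinct from `(j,i)` as an endpoint pair, covering the span
`(i,j)` and sharing the left endpoint `i`.  (Such a configuration would force the origin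
node `j` to dominate the covering arc, which is impossible in a projective tree.)
Consequently, the '\' semibracket never arises for projective trees. -/
theorem no_left_semibracket {n : ℕ} (T : DepTree n) (hproj : Projective T)
    (i j a b : ℕ) (harc : T.arc j i) (hij : i < j)
    (hcov : T.arc a b) (hminshare : min a b = i) (hspan : j ≤ max a b)
    (hdist : max a b ≠ j) : False := by
  obtain ⟨rfl, hjb⟩ | ⟨rfl, hja⟩ : (a = i ∧ j < b) ∨ (b = i ∧ j < a) := by omega
  · exact T.not_desc_of_arc harc (hproj.desc_of_arc hcov (by omega) (by omega))
  · exact hja.ne' (T.eq_of_arc_of_arc hcov harc)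
end

section
/- For a projective dependency tree and the proper rope cover R_pr, no node has both an incoming structural arc from the right and an outgoing structural arc to the right, and no node has both an incoming structural arc from the left and an outgoing structural arc to the left. -/
/-! Two arcs of a proper rope cover that both leave `v` on the same side share `v` as
an endpoint, so the shorter would lean on the longer; hence they have the same span and
are `(u, v)` and `(v, u)`, a cycle of length two in the tree. -/

lemma leansOn_of_amin_eq {a b : ℕ × ℕ} (hmin : amin a = amin b) (ha : amin a < amax a)
    (hlt : amax a < amax b) : leansOn a b :=
  ⟨⟨hmin.ge, ha, hlt.le⟩, fun h => hlt.ne (Prod.ext_iff.mp h).2, Or.inl hmin⟩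

lemma leansOn_of_amax_eq {a b : ℕ × ℕ} (hmax : amax a = amax b) (ha : amin a < amax a)
    (hlt : amin b < amin a) : leansOn a b :=
  ⟨⟨hlt.le, ha, hmax.le⟩, fun h => hlt.ne' (Prod.ext_iff.mp h).1, Or.inr hmax⟩

lemma amax_eq_of_amin_eq {a b : ℕ × ℕ} (hmin : amin a = amin b) (ha : amin a < amax a)
    (hb : amin b < amax b) (hab : ¬ leansOn a b) (hba : ¬ leansOn b a) : amax a = amax b := by
  rcases lt_trichotomy (amax a) (amax b) with h | h | h
  · exact absurd (leansOn_of_amin_eq hmin ha h) hab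
  · exact h
  · exact absurd (leansOn_of_amin_eq hmin.symm hb h) hba

lemma amin_eq_of_amax_eq {a b : ℕ × ℕ} (hmax : amax a = amax b) (ha : amin a < amax a)
    (hb : amin b < amax b) (hab : ¬ leansOn a b) (hba : ¬ leansOn b a) : amin a = amin b := by
  rcases lt_trichotomy (amin a) (amin b) with h | h | h
  · exact absurd (leansOn_of_amax_eq hmax.symm hb h) hba
  · exact h
  · exact absurd (leansOn_of_amax_eq hmax ha h) hab

lemma DepTree.not_arc_of_arc {n : ℕ} (T : DepTree n) {i j : ℕ} (h : T.arc i j) :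
    ¬ T.arc j i :=
  fun h' => T.acyclic i (.head h (.single h'))

theorem proper_ropeCover_no_same_side_general {n : ℕ} (T : DepTree n)
    (R : Finset (ℕ × ℕ))
    (hRarc : ∀ p ∈ R, T.arc p.1 p.2)
    (hproper : ∀ p ∈ R, ∀ q ∈ R, ¬ leansOn p q)
    (v : ℕ) :
    (¬ ∃ u w, (u, v) ∈ R ∧ v < u ∧ (v, w) ∈ R ∧ v < w) ∧
    (¬ ∃ u w, (u, v) ∈ R ∧ u < v ∧ (v, w) ∈ R ∧ w < v) := by
  constructor
  · rintro ⟨u, w, hu, hvu, hw, hvw⟩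
    have hspan := amax_eq_of_amin_eq (a := (u, v)) (b := (v, w))
      (by simp [amin, hvu.le, hvw.le]) (by simp [amin, amax, hvu]) (by simp [amin, amax, hvw])
      (hproper _ hu _ hw) (hproper _ hw _ hu)
    obtain rfl : u = w := by simpa [amax, hvu.le, hvw.le] using hspan
    exact T.not_arc_of_arc (hRarc _ hu) (hRarc _ hw)
  · rintro ⟨u, w, hu, huv, hw, hwv⟩
    have hspan := amin_eq_of_amax_eq (a := (u, v)) (b := (v, w))
      (by simp [amax, huv.le, hwv.le]) (by simp [amin, amax, huv]) (by simp [amin, amax, hwv])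
      (hproper _ hu _ hw) (hproper _ hw _ hu)
    obtain rfl : u = w := by simpa [amin, huv.le, hwv.le] using hspan
    exact T.not_arc_of_arc (hRarc _ hu) (hRarc _ hw)

/-- For a projective dependency tree and a proper rope cover `R`, no node has both an
incoming structural arc from the right and an outgoing structural arc to the right,
and no node has both an incoming structural arc from the left and an outgoing
structural arc to the left. -/
theorem proper_ropeCover_no_same_side {n : ℕ} (T : DepTree n) (hproj : Projective T)
    (R : Finset (ℕ × ℕ))
    (hRarc : ∀ p ∈ R, T.arc p.1 p.2)
    (hcover : ∀ i j, T.arc i j → (i, j) ∉ R → ∃ q ∈ R, leansOn (i, j) q)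
    (hproper : ∀ p ∈ R, ∀ q ∈ R, ¬ leansOn p q)
    (v : ℕ) :
    (¬ ∃ u w, (u, v) ∈ R ∧ v < u ∧ (v, w) ∈ R ∧ v < w) ∧
    (¬ ∃ u w, (u, v) ∈ R ∧ u < v ∧ (v, w) ∈ R ∧ w < v) :=
  proper_ropeCover_no_same_side_general T R hRarc hproper v
end
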